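/- Let K be a field, q ∈ K nonzero with q^m ≠ 1 for all integers m ≥ 1, and let d ∈ ℕ. Then the following identity holds in the formal power series ring K⟦X⟧: ∏_{k=0}^{d−1} (1 − X q^{−k}) = ∑_{i,j ≥ 0} (−1)^{i} q^{ i + j − d·i + i(i−1)/2 } X^{i+j} / ((q;q)_i (q;q)_j). (The family on the right is formally summable in K⟦X⟧ since the term indexed by (i,j) has X-order i+j; in particular the coefficient of X^n on the right vanishes for n > d.) -/
import Mathlib


/-- The q-Pochhammer symbol `(q;q)_n = ∏_{k=1}^{n} (1 − qᵏ)`. -/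
def pochQ {K : Type*} [Field K] (q : K) (n : ℕ) : K :=
  ∏ k ∈ Finset.range n, (1 - q ^ (k + 1))

open Finset Polynomial

section Aux

variable {K : Type*} [Field K] (q : K) (hq0 : q ≠ 0)
  (hq : ∀ m : ℕ, 1 ≤ m → q ^ m ≠ 1)

include hq0 hq

omit hq0 in
lemma pochQ_ne_zero (n : ℕ) : pochQ q n ≠ 0 := by
  refine Finset.prod_ne_zero_iff.mpr fun k _ => ?_
  exact sub_ne_zero_of_ne (Ne.symm (hq (k + 1) (by omega)))

omit hq0 hq in
lemma pochQ_succ (n : ℕ) : pochQ q (n + 1) = pochQ q n * (1 - q ^ (n + 1)) :=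
  Finset.prod_range_succ _ _

/-- the single-index summand -/
noncomputable def fq (q : K) (d n i : ℕ) : K :=
  (-1 : K) ^ i * q ^ (((n + i * (i - 1) / 2 : ℕ) : ℤ) - (d : ℤ) * (i : ℤ)) /
    (pochQ q i * pochQ q (n - i))

noncomputable def Sq (q : K) (d n : ℕ) : K := ∑ i ∈ Finset.range (n + 1), fq q d n i

omit hq0 hq in
lemma tri_succ (j : ℕ) : (j + 1) * ((j + 1) - 1) / 2 = j * (j - 1) / 2 + j := by
  rcases j with _ | j
  · rfl
  · show (j + 2) * (j + 1) / 2 = (j + 1) * j / 2 + (j + 1)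
    rw [show (j + 2) * (j + 1) = (j + 1) * j + 2 * (j + 1) from by ring,
      Nat.add_mul_div_left _ _ (by norm_num : 0 < 2)]

omit hq0 hq in
lemma base_zero : Sq q 0 0 = 1 := by
  simp [Sq, fq, pochQ]

/-- auxiliary family for the telescoping in the base case -/
noncomputable def Dq (q : K) (m i : ℕ) : K :=
  (-1 : K) ^ i * q ^ (m + 1 + i * (i - 1) / 2 + i) / (pochQ q i * pochQ q (m - i))

lemma lemA (m i : ℕ) :
    (1 - q ^ (i + 1)) * fq q 0 (m + 1) (i + 1) = -Dq q m i := by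
  have hpi : pochQ q i ≠ 0 := pochQ_ne_zero q hq i
  have hpk : pochQ q (m - i) ≠ 0 := pochQ_ne_zero q hq (m - i)
  have h1 : (1 : K) - q ^ (i + 1) ≠ 0 :=
    sub_ne_zero_of_ne (Ne.symm (hq (i + 1) (by omega)))
  simp only [fq, Dq]
  rw [tri_succ]
  simp only [Nat.succ_sub_succ, pochQ_succ q i,
    Nat.cast_zero, zero_mul, sub_zero, zpow_natCast]
  generalize i * (i - 1) / 2 = c
  field_simp
  ring

lemma lemB (m i : ℕ) (hi : i ≤ m) :
    q ^ i * (1 - q ^ (m + 1 - i)) * fq q 0 (m + 1) i = Dq q m i := by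
  obtain ⟨k, rfl⟩ : ∃ k, m = i + k := ⟨m - i, by omega⟩
  have e1 : i + k + 1 - i = k + 1 := by omega
  have e2 : i + k - i = k := by omega
  have hpi : pochQ q i ≠ 0 := pochQ_ne_zero q hq i
  have hpk : pochQ q k ≠ 0 := pochQ_ne_zero q hq k
  have h1 : (1 : K) - q ^ (k + 1) ≠ 0 :=
    sub_ne_zero_of_ne (Ne.symm (hq (k + 1) (by omega)))
  simp only [fq, Dq, e1, e2, pochQ_succ q k,
    Nat.cast_zero, zero_mul, sub_zero, zpow_natCast]
  field_simp
  ring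

lemma base_pos (n : ℕ) (hn : 1 ≤ n) : Sq q 0 n = 0 := by
  obtain ⟨m, rfl⟩ : ∃ m, n = m + 1 := ⟨n - 1, by omega⟩
  have hq1 : (1 : K) - q ^ (m + 1) ≠ 0 :=
    sub_ne_zero_of_ne (Ne.symm (hq (m + 1) (by omega)))
  have hsum : (1 - q ^ (m + 1)) * Sq q 0 (m + 1) = 0 := by
    rw [Sq, Finset.mul_sum]
    have split : ∀ i ∈ Finset.range (m + 2),
        (1 - q ^ (m + 1)) * fq q 0 (m + 1) i
          = (1 - q ^ i) * fq q 0 (m + 1) i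
            + q ^ i * (1 - q ^ (m + 1 - i)) * fq q 0 (m + 1) i := by
      intro i hi
      have hi' : i ≤ m + 1 := by
        have := Finset.mem_range.mp hi; omega
      have hp : q ^ i * q ^ (m + 1 - i) = q ^ (m + 1) := by
        rw [← pow_add]; congr 1; omega
      linear_combination fq q 0 (m + 1) i * hp
    rw [Finset.sum_congr rfl split, Finset.sum_add_distrib]
    have hA : ∑ i ∈ Finset.range (m + 2), (1 - q ^ i) * fq q 0 (m + 1) i
        = -∑ i ∈ Finset.range (m + 1), Dq q m i := by
      rw [Finset.sum_range_succ']
      simp only [pow_zero, sub_self, zero_mul, add_zero]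
      rw [← Finset.sum_neg_distrib]
      exact Finset.sum_congr rfl fun i _ => lemA q hq0 hq m i
    have hB : ∑ i ∈ Finset.range (m + 2), q ^ i * (1 - q ^ (m + 1 - i)) * fq q 0 (m + 1) i
        = ∑ i ∈ Finset.range (m + 1), Dq q m i := by
      rw [Finset.sum_range_succ]
      have : m + 1 - (m + 1) = 0 := by omega
      rw [this]
      simp only [pow_zero, sub_self, mul_zero, zero_mul, add_zero]
      refine Finset.sum_congr rfl fun i hi => ?_
      exact lemB q hq0 hq m i (by have := Finset.mem_range.mp hi; omega)
    rw [hA, hB]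
    ring
  exact (mul_eq_zero.mp hsum).resolve_left hq1

omit hq0 hq in
lemma step_zero (d : ℕ) : Sq q (d + 1) 0 = Sq q d 0 := by
  simp [Sq, fq]

lemma step_key (d m j : ℕ) :
    fq q d (m + 1) (j + 1) - fq q (d + 1) (m + 1) (j + 1) = q⁻¹ ^ d * fq q d m j := by
  have hpj : pochQ q j ≠ 0 := pochQ_ne_zero q hq j
  have hpk : pochQ q (m - j) ≠ 0 := pochQ_ne_zero q hq (m - j)
  have h1 : (1 : K) - q ^ (j + 1) ≠ 0 :=
    sub_ne_zero_of_ne (Ne.symm (hq (j + 1) (by omega)))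
  have hpj1 : pochQ q (j + 1) ≠ 0 := pochQ_ne_zero q hq (j + 1)
  simp only [fq]
  rw [tri_succ]
  simp only [Nat.succ_sub_succ]
  simp only [← Nat.cast_mul, zpow_sub₀ hq0, zpow_natCast, inv_pow]
  generalize j * (j - 1) / 2 = c
  rw [div_sub_div_same, div_eq_iff (by simp [hpj1, hpk])]
  rw [pochQ_succ q j]
  field_simp
  ring

lemma step_pos (d n : ℕ) (hn : 1 ≤ n) :
    Sq q (d + 1) n = Sq q d n - q⁻¹ ^ d * Sq q d (n - 1) := by
  obtain ⟨m, rfl⟩ : ∃ m, n = m + 1 := ⟨n - 1, by omega⟩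
  have key : Sq q d (m + 1) - Sq q (d + 1) (m + 1) = q⁻¹ ^ d * Sq q d m := by
    rw [Sq, Sq, ← Finset.sum_sub_distrib, Finset.sum_range_succ']
    have h0 : fq q d (m + 1) 0 - fq q (d + 1) (m + 1) 0 = 0 := by
      simp [fq]
    rw [h0, add_zero, Sq, Finset.mul_sum]
    exact Finset.sum_congr rfl fun i _ => step_key q hq0 hq d m i
  simp only [Nat.add_sub_cancel]
  linear_combination -key

omit hq0 hq in
lemma coeff_step (P : K[X]) (a : K) (n : ℕ) :
    (P * (1 - Polynomial.C a * Polynomial.X)).coeff (n + 1) =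
      P.coeff (n + 1) - a * P.coeff n := by
  have : P * (1 - Polynomial.C a * Polynomial.X)
      = P - Polynomial.C a * (P * Polynomial.X) := by ring
  rw [this, Polynomial.coeff_sub, Polynomial.coeff_C_mul, Polynomial.coeff_mul_X]

lemma main_single (d n : ℕ) :
    (∏ k ∈ Finset.range d, (1 - Polynomial.C (q⁻¹ ^ k) * Polynomial.X)).coeff n
      = Sq q d n := by
  induction d generalizing n with
  | zero =>
    simp only [Finset.range_zero, Finset.prod_empty, Polynomial.coeff_one]
    rcases Nat.eq_zero_or_pos n with h | h
    · subst h; rw [base_zero q]; simp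
    · rw [base_pos q hq0 hq n h]; simp; omega
  | succ d ih =>
    rw [Finset.prod_range_succ]
    rcases n with _ | n
    · simp only [Polynomial.mul_coeff_zero, Polynomial.coeff_sub, Polynomial.coeff_one,
        Polynomial.coeff_C_mul, Polynomial.coeff_X_zero]
      rw [step_zero q, ← ih 0]
      simp
    · rw [coeff_step, ih, ih, step_pos q hq0 hq d (n+1) (by omega)]
      simp

end Aux

/-- Expansion of `(x;q^{−1})_d = ∏_{k=0}^{d−1}(1 − X q^{−k})`, stated coefficientwise:
the coefficient of `Xⁿ` of the left-hand side equals
`∑_{i+j=n} (−1)^i q^{i+j−d·i+i(i−1)/2} / ((q;q)_i (q;q)_j)`. -/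
theorem qpoch_two_node_expansion {K : Type*} [Field K] (q : K) (hq0 : q ≠ 0)
    (hq : ∀ m : ℕ, 1 ≤ m → q ^ m ≠ 1) (d : ℕ) (n : ℕ) :
    (∏ k ∈ Finset.range d, (1 - Polynomial.C (q⁻¹ ^ k) * Polynomial.X)).coeff n =
      ∑ i ∈ Finset.range (n + 1), ∑ j ∈ Finset.range (n + 1),
        if i + j = n then
          (-1 : K) ^ i *
            q ^ (((i + j + i * (i - 1) / 2 : ℕ) : ℤ) - (d : ℤ) * (i : ℤ)) /
            (pochQ q i * pochQ q j)
        else 0 := by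
  rw [main_single q hq0 hq d n]
  rw [Sq]
  refine Finset.sum_congr rfl fun i hi => ?_
  have hi' : i ≤ n := by simpa using Nat.lt_succ_iff.mp (Finset.mem_range.mp hi)
  rw [Finset.sum_eq_single_of_mem (n - i) (Finset.mem_range.mpr (by omega))]
  · rw [if_pos (by omega)]
    have : i + (n - i) = n := by omega
    rw [fq, this]
  · intro j hj hne
    rw [if_neg (by omega)]
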